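/- arXiv:2206.08757 — 7 statements merged into one kernel-verified Lean document; each statement's English description precedes it below -/
import Mathlib

section
/- (Genie residual identity) Let λ > 0. For every y ∈ ℝ, y − θ̂_yᵀ x = (y − θ̂_λᵀ x)/K_λ; consequently (y − θ̂_yᵀ x)² = (1/K_λ²)(y − θ̂_λᵀ x)². -/
open Matrix

lemma vecMulVec_mulVec' {M : ℕ} (x v : Fin M → ℝ) :
    vecMulVec x x *ᵥ v = (x ⬝ᵥ v) • x := by
  ext i
  simp only [mulVec, vecMulVec_apply, dotProduct, Pi.smul_apply, smul_eq_mul]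
  simp_rw [mul_assoc]
  rw [← Finset.mul_sum, mul_comm]

lemma vecMulVec_posSemidef {M : ℕ} (x : Fin M → ℝ) :
    (vecMulVec x x).PosSemidef := by
  rw [posSemidef_iff_dotProduct_mulVec]
  constructor
  · ext i j
    simp [conjTranspose_apply, vecMulVec_apply, mul_comm]
  · intro v
    rw [vecMulVec_mulVec', star_trivial, dotProduct_smul, smul_eq_mul, dotProduct_comm]
    exact mul_self_nonneg _

/-- **genie residual identity.** For `λ > 0` and every `y`,
`y − θ̂_yᵀx = (y − θ̂_λᵀx)/K_λ`, hence `(y − θ̂_yᵀx)² = (1/K_λ²)(y − θ̂_λᵀx)²`. -/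
theorem genie_residual_identity {N M : ℕ}
    (X : Matrix (Fin N) (Fin M) ℝ) (Y : Fin N → ℝ) (x : Fin M → ℝ)
    (l : ℝ) (hl : 0 < l)
    (P : Matrix (Fin M) (Fin M) ℝ) (θridge : Fin M → ℝ) (K : ℝ)
    (θgenie : ℝ → Fin M → ℝ)
    (hP : P = (Xᵀ * X + l • (1 : Matrix (Fin M) (Fin M) ℝ))⁻¹)
    (hθridge : θridge = P *ᵥ (Xᵀ *ᵥ Y))
    (hK : K = 1 + x ⬝ᵥ (P *ᵥ x))
    (hθgenie : ∀ y : ℝ, θgenie y =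
      (Xᵀ * X + vecMulVec x x + l • (1 : Matrix (Fin M) (Fin M) ℝ))⁻¹
        *ᵥ (Xᵀ *ᵥ Y + y • x)) :
    ∀ y : ℝ,
      y - (θgenie y) ⬝ᵥ x = (y - θridge ⬝ᵥ x) / K ∧
      (y - (θgenie y) ⬝ᵥ x) ^ 2 = (1 / K ^ 2) * (y - θridge ⬝ᵥ x) ^ 2 := by
  intro y
  set A : Matrix (Fin M) (Fin M) ℝ := Xᵀ * X + l • 1 with hA
  -- A is positive definite
  have hApd : A.PosDef := by
    have h1 : (Xᵀ * X).PosSemidef := by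
      have := posSemidef_conjTranspose_mul_self X
      rwa [conjTranspose_eq_transpose_of_trivial] at this
    have h2 : (l • (1 : Matrix (Fin M) (Fin M) ℝ)).PosDef := by
      rw [smul_one_eq_diagonal]
      exact PosDef.diagonal fun _ => hl
    exact Matrix.PosDef.posSemidef_add h1 h2
  have hPeq : P = A⁻¹ := hP
  have hAdet : IsUnit A.det := isUnit_iff_ne_zero.mpr hApd.det_pos.ne'
  have hPA : P * A = 1 := by rw [hPeq]; exact nonsing_inv_mul A hAdet
  have hAP : A * P = 1 := by rw [hPeq]; exact mul_nonsing_inv A hAdet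
  -- P is positive definite, so K ≥ 1 > 0
  have hPpd : P.PosDef := hPeq ▸ hApd.inv
  have hxPx : 0 ≤ x ⬝ᵥ (P *ᵥ x) := by
    have := hPpd.posSemidef.dotProduct_mulVec_nonneg x
    rwa [star_trivial] at this
  have hK1 : (1 : ℝ) ≤ K := by rw [hK]; linarith
  have hK0 : K ≠ 0 := by linarith
  -- the genie matrix B = A + x xᵀ is positive definite
  set B : Matrix (Fin M) (Fin M) ℝ := A + vecMulVec x x with hB
  have hBpd : B.PosDef := hApd.add_posSemidef (vecMulVec_posSemidef x)
  have hBdet : IsUnit B.det := isUnit_iff_ne_zero.mpr hBpd.det_pos.ne'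
  -- explicit solution of the genie system
  set w : Fin M → ℝ := Xᵀ *ᵥ Y + y • x with hw
  set s : ℝ := x ⬝ᵥ (P *ᵥ w) with hs
  set v : Fin M → ℝ := P *ᵥ w - (s / K) • (P *ᵥ x) with hv
  have hxv : x ⬝ᵥ v = s / K := by
    rw [hv, dotProduct_sub, dotProduct_smul, smul_eq_mul, ← hs]
    have : x ⬝ᵥ (P *ᵥ x) = K - 1 := by rw [hK]; ring
    rw [this]
    field_simp
    ring
  have hBv : B *ᵥ v = w := by
    rw [hB, add_mulVec, vecMulVec_mulVec', hxv, hv, mulVec_sub, mulVec_smul,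
      mulVec_mulVec, mulVec_mulVec, hAP, one_mulVec, one_mulVec]
    abel
  have hgen : θgenie y = v := by
    have hBeq : Xᵀ * X + vecMulVec x x + l • (1 : Matrix (Fin M) (Fin M) ℝ) = B := by
      rw [hB, hA]; abel
    rw [hθgenie y, hBeq, ← hw, ← hBv, mulVec_mulVec, nonsing_inv_mul B hBdet, one_mulVec]
  -- value of the genie prediction
  have hvx : (θgenie y) ⬝ᵥ x = s / K := by
    rw [hgen, dotProduct_comm, hxv]
  -- s in terms of θridge
  have hsval : s = θridge ⬝ᵥ x + y * (K - 1) := by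
    rw [hs, hw, mulVec_add, mulVec_smul, dotProduct_add, dotProduct_smul, smul_eq_mul,
      hθridge, dotProduct_comm, hK]
    ring
  have h1 : y - (θgenie y) ⬝ᵥ x = (y - θridge ⬝ᵥ x) / K := by
    rw [hvx, hsval]
    field_simp
    ring
  refine ⟨h1, ?_⟩
  rw [h1, div_pow, one_div, div_eq_inv_mul]
end

section
/- (Lemma 1) Let λ > 0 and σ > 0. For every y ∈ ℝ, the weighted genie density satisfies N(y; θ̂_yᵀx, σ²)·w(θ̂_y) = c·(2πσ²)^{−1/2}·exp(−(y − θ̂_λᵀx + μ̂)²/(2σ̂²)), where μ̂ = λ K_λ (θ̂_λᵀP_λ x)/A_λ, σ̂² = σ² K_λ²/A_λ, and c = exp((1/(2σ²))((λ θ̂_λᵀP_λ x)²/A_λ − λ‖θ̂_λ‖²)). -/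
open Matrix Real

/-- The one-dimensional Gaussian density `N(y; m, v) = (2πv)^{−1/2} exp(−(y−m)²/(2v))`. -/
noncomputable def gaussD (y m v : ℝ) : ℝ :=
  (Real.sqrt (2 * Real.pi * v))⁻¹ * Real.exp (-(y - m) ^ 2 / (2 * v))

set_option maxHeartbeats 1000000 in
/-- **Lemma 1.** For `λ > 0`, `σ > 0` and every `y`,
`N(y; θ̂_yᵀx, σ²)·w(θ̂_y) = c·(2πσ²)^{−1/2}·exp(−(y − θ̂_λᵀx + μ̂)²/(2σ̂²))`,
with `μ̂ = λK_λ(θ̂_λᵀP_λx)/A_λ`, `σ̂² = σ²K_λ²/A_λ`,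
`c = exp((1/(2σ²))((λθ̂_λᵀP_λx)²/A_λ − λ‖θ̂_λ‖²))` and luckiness
`w(θ) = exp(−λ‖θ‖²/(2σ²))`. -/
theorem lpnml_lemma1 {N M : ℕ}
    (X : Matrix (Fin N) (Fin M) ℝ) (Y : Fin N → ℝ) (x : Fin M → ℝ)
    (l σ : ℝ) (hl : 0 < l) (hσ : 0 < σ)
    (P : Matrix (Fin M) (Fin M) ℝ) (θridge : Fin M → ℝ) (K A μ σhatSq c : ℝ)
    (θgenie : ℝ → Fin M → ℝ) (w : (Fin M → ℝ) → ℝ)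
    (hP : P = (Xᵀ * X + l • (1 : Matrix (Fin M) (Fin M) ℝ))⁻¹)
    (hθridge : θridge = P *ᵥ (Xᵀ *ᵥ Y))
    (hK : K = 1 + x ⬝ᵥ (P *ᵥ x))
    (hA : A = 1 + l * (x ⬝ᵥ ((P * P) *ᵥ x)))
    (hμ : μ = l * K * (θridge ⬝ᵥ (P *ᵥ x)) / A)
    (hσhatSq : σhatSq = σ ^ 2 * K ^ 2 / A)
    (hc : c = Real.exp ((1 / (2 * σ ^ 2)) *
      ((l * (θridge ⬝ᵥ (P *ᵥ x))) ^ 2 / A - l * (θridge ⬝ᵥ θridge))))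
    (hθgenie : ∀ y : ℝ, θgenie y =
      (Xᵀ * X + vecMulVec x x + l • (1 : Matrix (Fin M) (Fin M) ℝ))⁻¹
        *ᵥ (Xᵀ *ᵥ Y + y • x))
    (hw : ∀ θ : Fin M → ℝ, w θ = Real.exp (-(l * (θ ⬝ᵥ θ)) / (2 * σ ^ 2))) :
    ∀ y : ℝ,
      gaussD y ((θgenie y) ⬝ᵥ x) (σ ^ 2) * w (θgenie y)
        = c * (Real.sqrt (2 * Real.pi * σ ^ 2))⁻¹
            * Real.exp (-(y - θridge ⬝ᵥ x + μ) ^ 2 / (2 * σhatSq)) := by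
  intro y
  set B : Matrix (Fin M) (Fin M) ℝ := Xᵀ * X + l • (1 : Matrix (Fin M) (Fin M) ℝ) with hB
  -- positive definiteness of B
  have hXX : (Xᵀ * X).PosSemidef := by
    have := Matrix.posSemidef_conjTranspose_mul_self X
    rwa [Matrix.conjTranspose_eq_transpose_of_trivial] at this
  have hl1 : (l • (1 : Matrix (Fin M) (Fin M) ℝ)).PosDef := by
    rw [Matrix.smul_one_eq_diagonal]
    exact Matrix.PosDef.diagonal (fun _ => hl)
  have hBpd : B.PosDef := Matrix.PosDef.posSemidef_add hXX hl1
  have hBdet : IsUnit B.det := hBpd.det_pos.ne'.isUnit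
  have hBP : B * P = 1 := by rw [hP]; exact Matrix.mul_nonsing_inv _ hBdet
  have hPB : P * B = 1 := by rw [hP]; exact Matrix.nonsing_inv_mul _ hBdet
  have hBsym : Bᵀ = B := by
    have := hBpd.isHermitian
    rwa [Matrix.IsHermitian, Matrix.conjTranspose_eq_transpose_of_trivial] at this
  have hPsym : Pᵀ = P := by
    rw [hP, Matrix.transpose_nonsing_inv, hBsym]
  set z : Fin M → ℝ := P *ᵥ x with hz
  set r : ℝ := θridge ⬝ᵥ x with hr
  set s : ℝ := x ⬝ᵥ z with hs
  set u : ℝ := θridge ⬝ᵥ z with hu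
  set t : ℝ := z ⬝ᵥ z with ht
  have hBz : B *ᵥ z = x := by rw [hz, Matrix.mulVec_mulVec, hBP, Matrix.one_mulVec]
  have hstarz : star z = z := funext fun i => star_trivial _
  have hs0 : 0 ≤ s := by
    have := hBpd.posSemidef.dotProduct_mulVec_nonneg z
    rw [hstarz, hBz] at this
    rw [hs, dotProduct_comm]
    simpa using this
  have ht0 : 0 ≤ t := by
    rw [ht, dotProduct]
    exact Finset.sum_nonneg fun i _ => mul_self_nonneg _
  have hKs : K = 1 + s := hK
  have hAt : A = 1 + l * t := by
    rw [hA]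
    congr 1
    congr 1
    rw [← Matrix.mulVec_mulVec, ← hz]
    rw [Matrix.dotProduct_mulVec, ← Matrix.mulVec_transpose, hPsym, ← hz, ht]
  have hKpos : 0 < K := by rw [hKs]; linarith
  have hApos : 0 < A := by rw [hAt]; nlinarith
  have hKne : K ≠ 0 := hKpos.ne'
  have hAne : A ≠ 0 := hApos.ne'
  have hσ2 : (σ:ℝ) ^ 2 ≠ 0 := pow_ne_zero _ hσ.ne'
  -- the genie solution via Sherman–Morrison
  set γ : ℝ := (y - r) / K with hγ
  set θg : Fin M → ℝ := θridge + γ • z with hθg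
  have hvmv : ∀ v : Fin M → ℝ, vecMulVec x x *ᵥ v = (x ⬝ᵥ v) • x := by
    intro v
    funext i
    simp only [Matrix.mulVec, Matrix.vecMulVec_apply, dotProduct, Pi.smul_apply,
      smul_eq_mul, Finset.sum_mul]
    exact Finset.sum_congr rfl fun j _ => by ring
  have hvsemi : (vecMulVec x x).PosSemidef := by
    rw [Matrix.posSemidef_iff_dotProduct_mulVec]
    constructor
    · rw [Matrix.IsHermitian, Matrix.conjTranspose_eq_transpose_of_trivial]
      funext i j
      simp [Matrix.transpose_apply, Matrix.vecMulVec_apply, mul_comm]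
    · intro v
      have : star v = v := funext fun i => star_trivial _
      rw [this, hvmv v, dotProduct_smul, smul_eq_mul, dotProduct_comm]
      exact mul_self_nonneg _
  set B2 : Matrix (Fin M) (Fin M) ℝ :=
    Xᵀ * X + vecMulVec x x + l • (1 : Matrix (Fin M) (Fin M) ℝ) with hB2
  have hB2eq : B2 = B + vecMulVec x x := by rw [hB2, hB]; abel
  have hB2pd : B2.PosDef := by rw [hB2eq]; exact hBpd.add_posSemidef hvsemi
  have hB2det : IsUnit B2.det := hB2pd.det_pos.ne'.isUnit
  have hBθr : B *ᵥ θridge = Xᵀ *ᵥ Y := by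
    rw [hθridge, Matrix.mulVec_mulVec, hBP, Matrix.one_mulVec]
  have hsolve : B2 *ᵥ θg = Xᵀ *ᵥ Y + y • x := by
    rw [hB2eq, Matrix.add_mulVec, hθg, Matrix.mulVec_add, Matrix.mulVec_smul,
      hBθr, hBz, Matrix.mulVec_add, Matrix.mulVec_smul, hvmv, hvmv]
    have hxz : x ⬝ᵥ z = s := rfl
    have hxθr : x ⬝ᵥ θridge = r := by rw [hr, dotProduct_comm]
    rw [hxz, hxθr, smul_smul]
    have hs1 : (1 : ℝ) + s ≠ 0 := hKs ▸ hKne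
    have hy : y = γ + (r + γ * s) := by
      rw [hγ, hKs]
      field_simp
      ring
    rw [hy, add_smul, add_smul]
    abel
  have hθgy : θgenie y = θg := by
    rw [hθgenie y, ← hsolve, Matrix.mulVec_mulVec,
      Matrix.nonsing_inv_mul _ hB2det, Matrix.one_mulVec]
  have hzx : z ⬝ᵥ x = s := by rw [hs, dotProduct_comm]
  have hzθr : z ⬝ᵥ θridge = u := by rw [hu, dotProduct_comm]
  have hgx : θg ⬝ᵥ x = r + γ * s := by
    rw [hθg, add_dotProduct, smul_dotProduct, smul_eq_mul, hzx, ← hr]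
  have hgg : θg ⬝ᵥ θg = θridge ⬝ᵥ θridge + 2 * γ * u + γ ^ 2 * t := by
    rw [hθg, add_dotProduct, smul_dotProduct, dotProduct_add, dotProduct_smul,
      dotProduct_add, dotProduct_smul, smul_eq_mul, smul_eq_mul, smul_eq_mul,
      hzθr, ← hu, ← ht]
    ring
  rw [hθgy, hw, hgx, hgg, hc, hμ, hσhatSq, gaussD]
  rw [mul_assoc, ← Real.exp_add]
  conv_rhs => rw [mul_right_comm, ← Real.exp_add]
  rw [mul_comm]
  congr 1
  have hs1 : (1 : ℝ) + s ≠ 0 := hKs ▸ hKne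
  have hA1 : (1 : ℝ) + l * t ≠ 0 := hAt ▸ hAne
  rw [hγ, hKs, hAt]
  congr 1
  field_simp
  ring
end

section
/- (The genie is not a valid predictive distribution) Let λ > 0 and σ > 0. Then ∫_ℝ N(y; θ̂_yᵀx, σ²) dy = K_λ; in particular, if x ≠ 0 then this integral is strictly greater than 1. -/
open Matrix Real MeasureTheory

private lemma gauss_scaled_integral (v a K : ℝ) (hv : 0 < v) (hK : 0 < K) :
    (∫ y : ℝ, (Real.sqrt (2 * Real.pi * v))⁻¹ * Real.exp (-(K⁻¹ * y - a) ^ 2 / (2 * v))) = K := by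
  have h2v : 0 < 2 * Real.pi * v := by positivity
  rw [MeasureTheory.integral_const_mul]
  have hg : (fun y : ℝ => Real.exp (-(K⁻¹ * y - a) ^ 2 / (2 * v)))
      = fun y : ℝ => (fun t : ℝ => Real.exp (-(t - a) ^ 2 / (2 * v))) (K⁻¹ * y) := rfl
  rw [hg, Measure.integral_comp_mul_left (fun t : ℝ => Real.exp (-(t - a) ^ 2 / (2 * v))) K⁻¹]
  have hsub : (∫ t : ℝ, Real.exp (-(t - a) ^ 2 / (2 * v))) = ∫ t : ℝ, Real.exp (-(t) ^ 2 / (2 * v)) := by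
    exact integral_sub_right_eq_self (fun t : ℝ => Real.exp (-(t) ^ 2 / (2 * v))) a
  have hgauss : (∫ t : ℝ, Real.exp (-(t) ^ 2 / (2 * v))) = Real.sqrt (2 * Real.pi * v) := by
    have : (fun t : ℝ => Real.exp (-(t) ^ 2 / (2 * v))) = fun t : ℝ => Real.exp (-(2*v)⁻¹ * t ^ 2) := by
      funext t; ring_nf
    rw [this, integral_gaussian]
    rw [show Real.pi / (2*v)⁻¹ = 2 * Real.pi * v by field_simp]
  rw [hsub, hgauss, inv_inv, abs_of_pos hK, smul_eq_mul]
  have hne : Real.sqrt (2*Real.pi*v) ≠ 0 := (Real.sqrt_pos.2 h2v).ne'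
  field_simp

private lemma genie_mean_eq {N M : ℕ}
    (X : Matrix (Fin N) (Fin M) ℝ) (Y : Fin N → ℝ) (x : Fin M → ℝ)
    (l : ℝ) (hl : 0 < l)
    (P : Matrix (Fin M) (Fin M) ℝ) (K : ℝ)
    (hP : P = (Xᵀ * X + l • (1 : Matrix (Fin M) (Fin M) ℝ))⁻¹)
    (hK : K = 1 + x ⬝ᵥ (P *ᵥ x)) :
    ∀ y : ℝ, ((Xᵀ * X + vecMulVec x x + l • (1 : Matrix (Fin M) (Fin M) ℝ))⁻¹
        *ᵥ (Xᵀ *ᵥ Y + y • x)) ⬝ᵥ x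
      = K⁻¹ * ((P *ᵥ x) ⬝ᵥ (Xᵀ *ᵥ Y)) + (K⁻¹ * (x ⬝ᵥ (P *ᵥ x))) * y := by
  set A : Matrix (Fin M) (Fin M) ℝ := Xᵀ * X + l • (1 : Matrix (Fin M) (Fin M) ℝ) with hA
  set B : Matrix (Fin M) (Fin M) ℝ := Xᵀ * X + vecMulVec x x + l • (1 : Matrix (Fin M) (Fin M) ℝ) with hB
  have hXX : (Xᵀ * X).PosSemidef := by
    have := posSemidef_conjTranspose_mul_self X
    rwa [conjTranspose_eq_transpose_of_trivial] at this
  have hl1 : (l • (1 : Matrix (Fin M) (Fin M) ℝ)).PosDef := by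
    rw [smul_one_eq_diagonal]
    exact (posDef_diagonal_iff).2 fun i => hl
  have hxx : (vecMulVec x x).PosSemidef := by
    refine posSemidef_iff_dotProduct_mulVec.mpr ⟨?_, ?_⟩
    · ext i j; simp [vecMulVec_apply, conjTranspose_apply, mul_comm]
    · intro v
      have h : vecMulVec x x *ᵥ v = (x ⬝ᵥ v) • x := by
        ext i
        simp [vecMulVec_apply, mulVec, dotProduct, Finset.mul_sum, mul_assoc, mul_comm, mul_left_comm]
      rw [h]
      have : star v ⬝ᵥ (x ⬝ᵥ v) • x = (x ⬝ᵥ v) * (x ⬝ᵥ v) := by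
        simp [dotProduct_smul, dotProduct_comm, star_trivial, smul_eq_mul]
      rw [this]; exact mul_self_nonneg _
  have hApd : A.PosDef := Matrix.PosDef.posSemidef_add hXX hl1
  have hBpd : B.PosDef := by
    have : B = A + vecMulVec x x := by rw [hA, hB]; abel
    rw [this]; exact hApd.add_posSemidef hxx
  have hAP : A * P = 1 := by rw [hP]; exact Matrix.mul_nonsing_inv A (hApd.det_pos.ne'.isUnit)
  have hvecmul : ∀ v : Fin M → ℝ, vecMulVec x x *ᵥ v = (x ⬝ᵥ v) • x := by
    intro v; ext i
    simp [vecMulVec_apply, mulVec, dotProduct, Finset.mul_sum, mul_assoc, mul_comm, mul_left_comm]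
  set s : ℝ := x ⬝ᵥ (P *ᵥ x) with hs
  have hsnn : 0 ≤ s := by
    have hPpd : P.PosDef := hP ▸ hApd.inv
    by_cases hx : x = 0
    · simp [hs, hx]
    · have := hPpd.dotProduct_mulVec_pos hx
      simpa [star_trivial] using this.le
  have hKpos : 0 < K := by rw [hK]; linarith
  have hkey : B *ᵥ (K⁻¹ • (P *ᵥ x)) = x := by
    rw [mulVec_smul]
    have hBPx : B *ᵥ (P *ᵥ x) = K • x := by
      have : B = A + vecMulVec x x := by rw [hA, hB]; abel
      rw [this, add_mulVec, mulVec_mulVec, hAP, one_mulVec, hvecmul, ← hs, hK]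
      ext i; simp [smul_eq_mul]; ring
    rw [hBPx, smul_smul, inv_mul_cancel₀ hKpos.ne', one_smul]
  have hBinv : B⁻¹ *ᵥ x = K⁻¹ • (P *ᵥ x) := by
    have hBu : IsUnit B.det := hBpd.det_pos.ne'.isUnit
    conv_lhs => rw [← hkey]
    rw [mulVec_mulVec, Matrix.nonsing_inv_mul B hBu, one_mulVec]
  have hBsymm : B⁻¹ᵀ = B⁻¹ := by
    rw [transpose_nonsing_inv]
    congr 1
    have := hBpd.isHermitian
    rwa [IsHermitian, conjTranspose_eq_transpose_of_trivial] at this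
  intro y
  have h1 : (B⁻¹ *ᵥ (Xᵀ *ᵥ Y + y • x)) ⬝ᵥ x = (Xᵀ *ᵥ Y + y • x) ⬝ᵥ (B⁻¹ *ᵥ x) := by
    rw [dotProduct_comm, dotProduct_mulVec, ← mulVec_transpose, hBsymm, dotProduct_comm]
  rw [h1, hBinv]
  simp [dotProduct_smul, add_dotProduct, smul_dotProduct, smul_eq_mul, dotProduct_comm x (P *ᵥ x), ← hs]
  rw [dotProduct_comm (Xᵀ *ᵥ Y), dotProduct_comm (P *ᵥ x) x, ← hs]; ring

/-- **the genie is not a valid predictive distribution.** For `λ > 0` and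
`σ > 0`, `∫_ℝ N(y; θ̂_yᵀx, σ²) dy = K_λ`; if moreover `x ≠ 0`, this integral is `> 1`. -/
theorem genie_integral_eq_K {N M : ℕ}
    (X : Matrix (Fin N) (Fin M) ℝ) (Y : Fin N → ℝ) (x : Fin M → ℝ)
    (l σ : ℝ) (hl : 0 < l) (hσ : 0 < σ)
    (P : Matrix (Fin M) (Fin M) ℝ) (θridge : Fin M → ℝ) (K : ℝ)
    (θgenie : ℝ → Fin M → ℝ)
    (hP : P = (Xᵀ * X + l • (1 : Matrix (Fin M) (Fin M) ℝ))⁻¹)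
    (hθridge : θridge = P *ᵥ (Xᵀ *ᵥ Y))
    (hK : K = 1 + x ⬝ᵥ (P *ᵥ x))
    (hθgenie : ∀ y : ℝ, θgenie y =
      (Xᵀ * X + vecMulVec x x + l • (1 : Matrix (Fin M) (Fin M) ℝ))⁻¹
        *ᵥ (Xᵀ *ᵥ Y + y • x)) :
    (∫ y : ℝ, gaussD y ((θgenie y) ⬝ᵥ x) (σ ^ 2)) = K ∧
      (x ≠ 0 → 1 < ∫ y : ℝ, gaussD y ((θgenie y) ⬝ᵥ x) (σ ^ 2)) := by
  set s : ℝ := x ⬝ᵥ (P *ᵥ x) with hs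
  have hsnn : 0 ≤ s := by
    have hApd : (Xᵀ * X + l • (1 : Matrix (Fin M) (Fin M) ℝ)).PosDef := by
      refine Matrix.PosDef.posSemidef_add ?_ ?_
      · have := posSemidef_conjTranspose_mul_self X
        rwa [conjTranspose_eq_transpose_of_trivial] at this
      · rw [smul_one_eq_diagonal]
        exact (posDef_diagonal_iff).2 fun i => hl
    have hPpd : P.PosDef := hP ▸ hApd.inv
    by_cases hx : x = 0
    · simp [hs, hx]
    · have := hPpd.dotProduct_mulVec_pos hx
      simpa [star_trivial] using this.le
  have hKpos : 0 < K := by rw [hK]; linarith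
  set a : ℝ := K⁻¹ * ((P *ᵥ x) ⬝ᵥ (Xᵀ *ᵥ Y)) with ha
  have hmean := genie_mean_eq X Y x l hl P K hP hK
  have hc : (1 : ℝ) - K⁻¹ * s = K⁻¹ := by
    have hKne : K ≠ 0 := hKpos.ne'
    field_simp
    rw [hK]; ring
  have hfun : (fun y : ℝ => gaussD y ((θgenie y) ⬝ᵥ x) (σ ^ 2))
      = fun y : ℝ => (Real.sqrt (2 * Real.pi * σ ^ 2))⁻¹
          * Real.exp (-(K⁻¹ * y - a) ^ 2 / (2 * σ ^ 2)) := by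
    funext y
    rw [gaussD, hθgenie y, hmean y]
    congr 2
    have : y - (K⁻¹ * ((P *ᵥ x) ⬝ᵥ (Xᵀ *ᵥ Y)) + K⁻¹ * s * y)
        = (1 - K⁻¹ * s) * y - a := by rw [ha]; ring
    rw [this, hc]
  have hint : (∫ y : ℝ, gaussD y ((θgenie y) ⬝ᵥ x) (σ ^ 2)) = K := by
    rw [hfun]
    exact gauss_scaled_integral (σ ^ 2) a K (by positivity) hKpos
  refine ⟨hint, fun hx => ?_⟩
  rw [hint, hK]
  have hApd : (Xᵀ * X + l • (1 : Matrix (Fin M) (Fin M) ℝ)).PosDef := by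
    refine Matrix.PosDef.posSemidef_add ?_ ?_
    · have := posSemidef_conjTranspose_mul_self X
      rwa [conjTranspose_eq_transpose_of_trivial] at this
    · rw [smul_one_eq_diagonal]
      exact (posDef_diagonal_iff).2 fun i => hl
  have hPpd : P.PosDef := hP ▸ hApd.inv
  have := hPpd.dotProduct_mulVec_pos hx
  simp only [star_trivial] at this
  linarith
end

section
/- (LpNML normalization factor) Let λ > 0 and σ > 0, and let f(y) = N(y; θ̂_yᵀx, σ²)·w(θ̂_y). Then f is Lebesgue integrable on ℝ and ∫_ℝ f(y) dy = c·√(σ̂²/σ²) = c·K_λ/√(A_λ), where σ̂² = σ² K_λ²/A_λ and c = exp((1/(2σ²))((λ θ̂_λᵀP_λ x)²/A_λ − λ‖θ̂_λ‖²)). -/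
open Matrix Real MeasureTheory

/-- Gaussian integral with a shifted completed square. -/
lemma gauss_shift_integral (k e m : ℝ) (hk : 0 < k) :
    Integrable (fun y : ℝ => Real.exp (-(k * (y - m) ^ 2 + e))) ∧
    (∫ y : ℝ, Real.exp (-(k * (y - m) ^ 2 + e)))
      = Real.exp (-e) * Real.sqrt (Real.pi / k) := by
  have hrw : (fun y : ℝ => Real.exp (-(k * (y - m) ^ 2 + e)))
      = fun y : ℝ => Real.exp (-e) * Real.exp (-k * (y - m) ^ 2) := by
    funext y
    rw [← Real.exp_add]
    ring_nf
  have hint : Integrable (fun y : ℝ => Real.exp (-k * y ^ 2)) :=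
    integrable_exp_neg_mul_sq hk
  constructor
  · rw [hrw]
    exact (hint.comp_sub_right m).const_mul _
  · rw [hrw, MeasureTheory.integral_const_mul,
      MeasureTheory.integral_sub_right_eq_self
        (μ := (volume : Measure ℝ)) (fun y : ℝ => Real.exp (-k * y ^ 2)) m,
      integral_gaussian]

/-- **LpNML normalization factor.** For `λ > 0`, `σ > 0` and
`f(y) = N(y; θ̂_yᵀx, σ²)·w(θ̂_y)`, the function `f` is Lebesgue integrable and
`∫_ℝ f = c·√(σ̂²/σ²) = c·K_λ/√(A_λ)`, where `σ̂² = σ²K_λ²/A_λ` and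
`c = exp((1/(2σ²))((λθ̂_λᵀP_λx)²/A_λ − λ‖θ̂_λ‖²))`. -/
theorem lpnml_normalization_factor {N M : ℕ}
    (X : Matrix (Fin N) (Fin M) ℝ) (Y : Fin N → ℝ) (x : Fin M → ℝ)
    (l σ : ℝ) (hl : 0 < l) (hσ : 0 < σ)
    (P : Matrix (Fin M) (Fin M) ℝ) (θridge : Fin M → ℝ) (K A σhatSq c : ℝ)
    (θgenie : ℝ → Fin M → ℝ) (w : (Fin M → ℝ) → ℝ) (f : ℝ → ℝ)
    (hP : P = (Xᵀ * X + l • (1 : Matrix (Fin M) (Fin M) ℝ))⁻¹)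
    (hθridge : θridge = P *ᵥ (Xᵀ *ᵥ Y))
    (hK : K = 1 + x ⬝ᵥ (P *ᵥ x))
    (hA : A = 1 + l * (x ⬝ᵥ ((P * P) *ᵥ x)))
    (hσhatSq : σhatSq = σ ^ 2 * K ^ 2 / A)
    (hc : c = Real.exp ((1 / (2 * σ ^ 2)) *
      ((l * (θridge ⬝ᵥ (P *ᵥ x))) ^ 2 / A - l * (θridge ⬝ᵥ θridge))))
    (hθgenie : ∀ y : ℝ, θgenie y =
      (Xᵀ * X + vecMulVec x x + l • (1 : Matrix (Fin M) (Fin M) ℝ))⁻¹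
        *ᵥ (Xᵀ *ᵥ Y + y • x))
    (hw : ∀ θ : Fin M → ℝ, w θ = Real.exp (-(l * (θ ⬝ᵥ θ)) / (2 * σ ^ 2)))
    (hf : ∀ y : ℝ, f y = gaussD y ((θgenie y) ⬝ᵥ x) (σ ^ 2) * w (θgenie y)) :
    Integrable f ∧
      (∫ y : ℝ, f y) = c * Real.sqrt (σhatSq / σ ^ 2) ∧
      (∫ y : ℝ, f y) = c * K / Real.sqrt A := by
  set S : Matrix (Fin M) (Fin M) ℝ := Xᵀ * X + l • (1 : Matrix (Fin M) (Fin M) ℝ) with hSdef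
  set T : Matrix (Fin M) (Fin M) ℝ :=
    Xᵀ * X + vecMulVec x x + l • (1 : Matrix (Fin M) (Fin M) ℝ) with hTdef
  -- positive definiteness
  have hXX : (Xᵀ * X).PosSemidef := by
    have h := Matrix.posSemidef_conjTranspose_mul_self X
    rwa [Matrix.conjTranspose_eq_transpose_of_trivial] at h
  have hl1 : (l • (1 : Matrix (Fin M) (Fin M) ℝ)).PosDef := by
    rw [Matrix.smul_one_eq_diagonal]
    exact Matrix.posDef_diagonal_iff.mpr fun _ => hl
  have hS : S.PosDef := Matrix.PosDef.posSemidef_add hXX hl1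
  have hvmv : ∀ z : Fin M → ℝ, (vecMulVec x x) *ᵥ z = (x ⬝ᵥ z) • x := by
    intro z
    funext i
    simp only [Matrix.mulVec, Matrix.vecMulVec_apply, dotProduct, Pi.smul_apply,
      smul_eq_mul]
    rw [Finset.sum_mul]
    exact Finset.sum_congr rfl fun j _ => by ring
  have hxx : (vecMulVec x x).PosSemidef := by
    rw [Matrix.posSemidef_iff_dotProduct_mulVec]
    constructor
    · show (vecMulVec x x)ᴴ = vecMulVec x x
      funext i j
      simp [Matrix.vecMulVec_apply, mul_comm]
    · intro z
      rw [hvmv z]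
      have h1 : star z ⬝ᵥ (x ⬝ᵥ z) • x = (x ⬝ᵥ z) * (x ⬝ᵥ z) := by
        rw [dotProduct_smul]
        simp [dotProduct_comm, mul_comm]
      rw [h1]
      exact mul_self_nonneg _
  have hT : T.PosDef := by
    have h : T = S + vecMulVec x x := by rw [hTdef, hSdef]; abel
    rw [h]
    exact hS.add_posSemidef hxx
  -- inverses
  have hSP : S * P = 1 := by rw [hP]; exact Matrix.mul_nonsing_inv _ hS.det_pos.ne'.isUnit
  have hTT : T⁻¹ * T = 1 := Matrix.nonsing_inv_mul _ hT.det_pos.ne'.isUnit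
  -- symmetry of P
  have hSsymm : Sᵀ = S := by
    rw [hSdef]
    simp [Matrix.transpose_add, Matrix.transpose_mul, Matrix.transpose_smul]
  have hPsymm : Pᵀ = P := by
    rw [hP, Matrix.transpose_nonsing_inv, hSsymm]
  have hsymP : ∀ a b : Fin M → ℝ, (P *ᵥ a) ⬝ᵥ b = a ⬝ᵥ (P *ᵥ b) := by
    intro a b
    rw [Matrix.dotProduct_mulVec a P b,
      show P *ᵥ a = a ᵥ* P by rw [← hPsymm, Matrix.vecMul_transpose, hPsymm]]
  -- scalars
  set p : ℝ := x ⬝ᵥ (P *ᵥ x) with hpdef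
  set q : ℝ := x ⬝ᵥ ((P * P) *ᵥ x) with hqdef
  set t : ℝ := x ⬝ᵥ θridge with htdef
  set r : ℝ := θridge ⬝ᵥ (P *ᵥ x) with hrdef
  set n2 : ℝ := θridge ⬝ᵥ θridge with hn2def
  have hPP : (P * P) *ᵥ x = P *ᵥ (P *ᵥ x) := (Matrix.mulVec_mulVec x P P).symm
  have hq' : (P *ᵥ x) ⬝ᵥ (P *ᵥ x) = q := by rw [hqdef, hPP]; exact hsymP x (P *ᵥ x)
  have hq0 : 0 ≤ q := by
    rw [← hq']
    exact Finset.sum_nonneg fun i _ => mul_self_nonneg _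
  have hp0 : 0 ≤ p := by
    have hPpd : P.PosDef := by rw [hP]; exact hS.inv
    have h := hPpd.posSemidef.dotProduct_mulVec_nonneg x
    simpa using h
  have hK0 : 0 < K := by rw [hK]; linarith
  have hA0 : 0 < A := by rw [hA]; nlinarith
  have hKne : K ≠ 0 := ne_of_gt hK0
  have hAne : A ≠ 0 := ne_of_gt hA0
  have hσ2 : (0:ℝ) < σ ^ 2 := by positivity
  -- affine representation of the genie parameter
  set v : Fin M → ℝ := K⁻¹ • (P *ᵥ x) with hvdef
  set u : Fin M → ℝ := θridge - (t / K) • (P *ᵥ x) with hudef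
  have hSPx : S *ᵥ (P *ᵥ x) = x := by
    rw [Matrix.mulVec_mulVec, hSP, Matrix.one_mulVec]
  have hSθ : S *ᵥ θridge = Xᵀ *ᵥ Y := by
    rw [hθridge, Matrix.mulVec_mulVec, hSP, Matrix.one_mulVec]
  have hTz : ∀ z : Fin M → ℝ, T *ᵥ z = S *ᵥ z + (x ⬝ᵥ z) • x := by
    intro z
    have h : T = S + vecMulVec x x := by rw [hTdef, hSdef]; abel
    rw [h, Matrix.add_mulVec, hvmv]
  have hTPx : T *ᵥ (P *ᵥ x) = K • x := by
    rw [hTz, hSPx, ← hpdef, hK, add_smul, one_smul]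
  have hTv : T *ᵥ v = x := by
    rw [hvdef, Matrix.mulVec_smul, hTPx, smul_smul, inv_mul_cancel₀ hKne, one_smul]
  have hTu : T *ᵥ u = Xᵀ *ᵥ Y := by
    rw [hudef, Matrix.mulVec_sub, Matrix.mulVec_smul, hTPx, hTz, hSθ, ← htdef,
      smul_smul, div_mul_cancel₀ _ hKne]
    abel
  have hgen : ∀ y : ℝ, θgenie y = u + y • v := by
    intro y
    have h : Xᵀ *ᵥ Y + y • x = T *ᵥ (u + y • v) := by
      rw [Matrix.mulVec_add, Matrix.mulVec_smul, hTu, hTv]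
    rw [hθgenie y, h, Matrix.mulVec_mulVec, hTT, Matrix.one_mulVec]
  -- dot products
  have hθx : θridge ⬝ᵥ x = t := by rw [htdef, dotProduct_comm]
  have hPxx : (P *ᵥ x) ⬝ᵥ x = p := by rw [hpdef, dotProduct_comm]
  have hPxθ : (P *ᵥ x) ⬝ᵥ θridge = r := by rw [hrdef, dotProduct_comm]
  have hux : u ⬝ᵥ x = t - t / K * p := by
    rw [hudef, sub_dotProduct, smul_dotProduct, hθx, hPxx, smul_eq_mul]
  have hvx : v ⬝ᵥ x = K⁻¹ * p := by
    rw [hvdef, smul_dotProduct, hPxx, smul_eq_mul]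
  have huu : u ⬝ᵥ u = n2 - 2 * (t / K) * r + (t / K) ^ 2 * q := by
    rw [hudef]
    rw [sub_dotProduct, dotProduct_sub, dotProduct_sub,
      smul_dotProduct, dotProduct_smul, smul_dotProduct,
      dotProduct_smul, hPxθ, hq', ← hn2def, ← hrdef]
    simp only [smul_eq_mul]
    ring
  have huv : u ⬝ᵥ v = K⁻¹ * r - t / K * K⁻¹ * q := by
    rw [hudef, hvdef, sub_dotProduct, dotProduct_smul,
      smul_dotProduct, dotProduct_smul, hq', ← hrdef]
    simp only [smul_eq_mul]
    ring
  have hvv : v ⬝ᵥ v = K⁻¹ ^ 2 * q := by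
    rw [hvdef, smul_dotProduct, dotProduct_smul, hq']
    simp only [smul_eq_mul]
    ring
  -- the completed square
  set k : ℝ := A / (2 * σ ^ 2 * K ^ 2) with hkdef
  set m : ℝ := (t * A - l * r * K) / A with hmdef
  set e : ℝ := (l * n2 - (l * r) ^ 2 / A) / (2 * σ ^ 2) with hedef
  have hk0 : 0 < k := by rw [hkdef]; positivity
  have hfy : ∀ y : ℝ,
      f y = (Real.sqrt (2 * Real.pi * σ ^ 2))⁻¹ * Real.exp (-(k * (y - m) ^ 2 + e)) := by
    intro y
    rw [hf y, hw, gaussD, hgen y]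
    rw [add_dotProduct, smul_dotProduct, hux, hvx]
    rw [show (u + y • v) ⬝ᵥ (u + y • v)
        = u ⬝ᵥ u + y * (u ⬝ᵥ v) + y * (u ⬝ᵥ v) + y ^ 2 * (v ⬝ᵥ v) by
      simp only [add_dotProduct, dotProduct_add, smul_dotProduct,
        dotProduct_smul, dotProduct_comm v u, smul_eq_mul]
      ring]
    rw [huu, huv, hvv, mul_assoc, ← Real.exp_add]
    congr 2
    rw [hkdef, hmdef, hedef, hK, hA]
    have hKK : (1:ℝ) + p ≠ 0 := by rw [hK] at hKne; exact hKne
    have hAA : (1:ℝ) + l * q ≠ 0 := by rw [hA] at hAne; exact hAne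
    field_simp
    ring_nf
    field_simp
    ring
  -- integrability and the integral
  have hgauss := gauss_shift_integral k e m hk0
  have hfeq : f = fun y : ℝ =>
      (Real.sqrt (2 * Real.pi * σ ^ 2))⁻¹ * Real.exp (-(k * (y - m) ^ 2 + e)) :=
    funext hfy
  have hInt : Integrable f := by
    rw [hfeq]; exact hgauss.1.const_mul _
  have hval : (∫ y : ℝ, f y)
      = (Real.sqrt (2 * Real.pi * σ ^ 2))⁻¹ * (Real.exp (-e) * Real.sqrt (Real.pi / k)) := by
    rw [hfeq, MeasureTheory.integral_const_mul, hgauss.2]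
  -- simplify the closed form
  have h2πσ : (0:ℝ) < 2 * Real.pi * σ ^ 2 := by positivity
  have hπk : Real.pi / k = (2 * Real.pi * σ ^ 2) * (K ^ 2 / A) := by
    rw [hkdef]
    field_simp
  have hsqrtKA : Real.sqrt (K ^ 2 / A) = K / Real.sqrt A := by
    rw [Real.sqrt_div (by positivity), Real.sqrt_sq hK0.le]
  have hce : c = Real.exp (-e) := by
    rw [hc, hedef]
    congr 1
    field_simp
    ring
  have hmain : (∫ y : ℝ, f y) = c * K / Real.sqrt A := by
    rw [hval, hπk, Real.sqrt_mul h2πσ.le, hsqrtKA, hce]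
    rw [show (Real.sqrt (2 * Real.pi * σ ^ 2))⁻¹ *
        (Real.exp (-e) * (Real.sqrt (2 * Real.pi * σ ^ 2) * (K / Real.sqrt A)))
        = (Real.sqrt (2 * Real.pi * σ ^ 2))⁻¹ * Real.sqrt (2 * Real.pi * σ ^ 2) *
          (Real.exp (-e) * K / Real.sqrt A) by ring]
    rw [inv_mul_cancel₀ (Real.sqrt_ne_zero'.mpr h2πσ), one_mul]
  refine ⟨hInt, ?_, hmain⟩
  rw [hmain, hσhatSq]
  rw [show σ ^ 2 * K ^ 2 / A / σ ^ 2 = K ^ 2 / A by field_simp]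
  rw [hsqrtKA]
  ring
end

section
/- (Theorem 2: the LpNML predictive distribution for ridge regression) Let λ > 0 and σ > 0, and let f(y) = N(y; θ̂_yᵀx, σ²)·w(θ̂_y). Then for every y ∈ ℝ, f(y)/∫_ℝ f(y') dy' = N(y; θ̂_λᵀx − μ̂, σ̂²), where μ̂ = λ K_λ (θ̂_λᵀP_λ x)/A_λ and σ̂² = σ² K_λ²/A_λ. In particular the LpNML predictive distribution is Gaussian with mean θ̂_λᵀx − μ̂ and variance σ̂². -/
open Matrix Real MeasureTheory

lemma gaussD_eq_pdf (m v : ℝ) (hv : 0 < v) (y : ℝ) :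
    gaussD y m v = ProbabilityTheory.gaussianPDFReal m ⟨v, hv.le⟩ y := rfl

lemma gaussD_integral (m v : ℝ) (hv : 0 < v) : ∫ y, gaussD y m v = 1 := by
  have h := ProbabilityTheory.integral_gaussianPDFReal_eq_one m
    (v := ⟨v, hv.le⟩) (fun h0 => hv.ne' (by exact congrArg NNReal.toReal h0))
  simpa [gaussD_eq_pdf m v hv] using h

lemma vecMulVec_mulVec'_s9 {m : Type*} [Fintype m] (a b v : m → ℝ) :
    vecMulVec a b *ᵥ v = (b ⬝ᵥ v) • a := by
  ext i
  simp only [mulVec, dotProduct, vecMulVec_apply, Pi.smul_apply, smul_eq_mul, Finset.sum_mul]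
  exact Finset.sum_congr rfl fun j _ => by ring

/-- **Theorem 2: the LpNML predictive distribution for ridge regression.**
For `λ > 0`, `σ > 0` and `f(y) = N(y; θ̂_yᵀx, σ²)·w(θ̂_y)`, for every `y`
`f(y)/∫f = N(y; θ̂_λᵀx − μ̂, σ̂²)`, where `μ̂ = λK_λ(θ̂_λᵀP_λx)/A_λ` and
`σ̂² = σ²K_λ²/A_λ`: the LpNML predictive distribution is Gaussian with mean
`θ̂_λᵀx − μ̂` and variance `σ̂²`. -/
theorem lpnml_predictive_distribution {N M : ℕ}
    (X : Matrix (Fin N) (Fin M) ℝ) (Y : Fin N → ℝ) (x : Fin M → ℝ)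
    (l σ : ℝ) (hl : 0 < l) (hσ : 0 < σ)
    (P : Matrix (Fin M) (Fin M) ℝ) (θridge : Fin M → ℝ) (K A μ σhatSq : ℝ)
    (θgenie : ℝ → Fin M → ℝ) (w : (Fin M → ℝ) → ℝ) (f : ℝ → ℝ)
    (hP : P = (Xᵀ * X + l • (1 : Matrix (Fin M) (Fin M) ℝ))⁻¹)
    (hθridge : θridge = P *ᵥ (Xᵀ *ᵥ Y))
    (hK : K = 1 + x ⬝ᵥ (P *ᵥ x))
    (hA : A = 1 + l * (x ⬝ᵥ ((P * P) *ᵥ x)))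
    (hμ : μ = l * K * (θridge ⬝ᵥ (P *ᵥ x)) / A)
    (hσhatSq : σhatSq = σ ^ 2 * K ^ 2 / A)
    (hθgenie : ∀ y : ℝ, θgenie y =
      (Xᵀ * X + vecMulVec x x + l • (1 : Matrix (Fin M) (Fin M) ℝ))⁻¹
        *ᵥ (Xᵀ *ᵥ Y + y • x))
    (hw : ∀ θ : Fin M → ℝ, w θ = Real.exp (-(l * (θ ⬝ᵥ θ)) / (2 * σ ^ 2)))
    (hf : ∀ y : ℝ, f y = gaussD y ((θgenie y) ⬝ᵥ x) (σ ^ 2) * w (θgenie y)) :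
    ∀ y : ℝ, f y / (∫ y' : ℝ, f y') = gaussD y (θridge ⬝ᵥ x - μ) σhatSq := by
  -- the base matrix `B = XᵀX + l•1` and its inverse `P`
  set B : Matrix (Fin M) (Fin M) ℝ := Xᵀ * X + l • (1 : Matrix (Fin M) (Fin M) ℝ) with hBdef
  have hBpd : B.PosDef := by
    have hXX : (Xᵀ * X).PosSemidef := by
      have := Matrix.posSemidef_conjTranspose_mul_self X
      rwa [Matrix.conjTranspose_eq_transpose_of_trivial] at this
    have hsm : (l • (1 : Matrix (Fin M) (Fin M) ℝ)).PosDef := by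
      refine Matrix.PosDef.of_dotProduct_mulVec_pos ?_ ?_
      · show _ = _
        rw [Matrix.conjTranspose_eq_transpose_of_trivial]
        simp
      · intro v hv
        have h1 : star v ⬝ᵥ (l • (1 : Matrix (Fin M) (Fin M) ℝ)) *ᵥ v = l * (v ⬝ᵥ v) := by
          simp [Matrix.smul_mulVec, Matrix.one_mulVec, star_trivial]
        rw [h1]
        exact mul_pos hl (by
          have := dotProduct_self_star_pos_iff (v := v)
          simpa [star_trivial] using this.mpr hv)
    exact Matrix.PosDef.posSemidef_add hXX hsm
  have hBdet : IsUnit B.det := hBpd.det_pos.ne'.isUnit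
  have hBP : B * P = 1 := by rw [hP]; exact Matrix.mul_nonsing_inv B hBdet
  have hBsym : Bᵀ = B := by
    simp [hBdef, Matrix.transpose_add, Matrix.transpose_smul, Matrix.transpose_mul,
      Matrix.transpose_one, Matrix.transpose_transpose]
  have hPsym : Pᵀ = P := by
    rw [hP, Matrix.transpose_nonsing_inv, hBsym, ← hP]
  have hPpd : P.PosDef := hP ▸ hBpd.inv
  -- scalar abbreviations
  set Px : Fin M → ℝ := P *ᵥ x with hPxdef
  set k : ℝ := x ⬝ᵥ Px with hkdef
  set r : ℝ := θridge ⬝ᵥ x with hrdef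
  set t : ℝ := θridge ⬝ᵥ Px with htdef
  set p : ℝ := Px ⬝ᵥ Px with hpdef
  set n : ℝ := θridge ⬝ᵥ θridge with hndef
  have hk0 : 0 ≤ k := by
    have := hPpd.posSemidef.dotProduct_mulVec_nonneg x
    simpa [star_trivial] using this
  have hKpos : 0 < K := by rw [hK]; linarith
  have hp0 : 0 ≤ p := by
    have := dotProduct_self_star_nonneg Px
    simpa [star_trivial, dotProduct_comm] using this
  have hpid : x ⬝ᵥ ((P * P) *ᵥ x) = p := by
    rw [← Matrix.mulVec_mulVec, Matrix.dotProduct_mulVec]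
    congr 1
    rw [← hPsym, Matrix.vecMul_transpose]
  have hA' : A = 1 + l * p := by rw [hA, hpid]
  have hApos : 0 < A := by
    have : 0 ≤ l * p := mul_nonneg hl.le hp0
    rw [hA']; linarith
  have hσhpos : 0 < σhatSq := by
    rw [hσhatSq]
    exact div_pos (mul_pos (pow_pos hσ 2) (pow_pos hKpos 2)) hApos
  -- the genie matrix `C = B + xxᵀ`
  set C : Matrix (Fin M) (Fin M) ℝ :=
    Xᵀ * X + vecMulVec x x + l • (1 : Matrix (Fin M) (Fin M) ℝ) with hCdef
  have hCB : C = B + vecMulVec x x := by rw [hCdef, hBdef]; abel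
  have hvv : (vecMulVec x x).PosSemidef := by
    refine Matrix.PosSemidef.of_dotProduct_mulVec_nonneg ?_ ?_
    · show _ = _
      rw [Matrix.conjTranspose_eq_transpose_of_trivial]
      ext i j
      simp [Matrix.transpose_apply, Matrix.vecMulVec_apply, mul_comm]
    · intro v
      rw [vecMulVec_mulVec'_s9]
      have : star v ⬝ᵥ (x ⬝ᵥ v) • x = (x ⬝ᵥ v) * (x ⬝ᵥ v) := by
        simp [star_trivial, dotProduct_smul, smul_eq_mul, dotProduct_comm]
      rw [this]
      exact mul_self_nonneg _
  have hCpd : C.PosDef := hCB ▸ hBpd.add_posSemidef hvv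
  have hCdet : IsUnit C.det := hCpd.det_pos.ne'.isUnit
  have hBθ : B *ᵥ θridge = Xᵀ *ᵥ Y := by
    rw [hθridge, Matrix.mulVec_mulVec, hBP, Matrix.one_mulVec]
  have hBPx : B *ᵥ Px = x := by
    rw [hPxdef, Matrix.mulVec_mulVec, hBP, Matrix.one_mulVec]
  have hxθ : x ⬝ᵥ θridge = r := dotProduct_comm x θridge
  -- the genie parameter in closed form
  have hgen : ∀ y : ℝ, θgenie y = θridge + ((y - r) / K) • Px := by
    intro y
    have hCv : C *ᵥ (θridge + ((y - r) / K) • Px) = Xᵀ *ᵥ Y + y • x := by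
      rw [hCB, Matrix.add_mulVec, Matrix.mulVec_add, Matrix.mulVec_smul,
        Matrix.mulVec_add, Matrix.mulVec_smul, hBθ, hBPx, vecMulVec_mulVec'_s9,
        vecMulVec_mulVec'_s9, hxθ]
      have hc : (y - r) / K * (1 + k) = y - r := by
        rw [← hK]
        field_simp
      ext i
      simp only [Pi.add_apply, Pi.smul_apply, smul_eq_mul]
      linear_combination x i * hc
    rw [hθgenie y, ← hCv, Matrix.mulVec_mulVec, Matrix.nonsing_inv_mul C hCdet,
      Matrix.one_mulVec]
  -- scalar form of the mean and norm
  have hgx : ∀ y : ℝ, θgenie y ⬝ᵥ x = r + (y - r) / K * k := by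
    intro y
    rw [hgen y, add_dotProduct, smul_dotProduct, dotProduct_comm Px x]
    simp [smul_eq_mul, hkdef, hrdef]
  have hgn : ∀ y : ℝ, θgenie y ⬝ᵥ θgenie y
      = n + 2 * ((y - r) / K) * t + ((y - r) / K) ^ 2 * p := by
    intro y
    rw [hgen y]
    simp only [add_dotProduct, dotProduct_add, smul_dotProduct,
      dotProduct_smul, smul_eq_mul]
    rw [dotProduct_comm Px θridge]
    ring
  -- f is a scaled Gaussian
  set m0 : ℝ := r - μ with hm0
  set D : ℝ := (l ^ 2 * t ^ 2 / A - l * n) / (2 * σ ^ 2) with hD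
  set cst : ℝ := Real.sqrt (2 * π * σhatSq) * (Real.sqrt (2 * π * σ ^ 2))⁻¹ * Real.exp D
    with hcst
  have hsqσh : Real.sqrt (2 * π * σhatSq) ≠ 0 := by
    positivity
  have hcstpos : 0 < cst := by
    rw [hcst]
    positivity
  have hfc : ∀ z : ℝ, f z = cst * gaussD z m0 σhatSq := by
    intro z
    rw [hf z, hw (θgenie z), hgx z, hgn z]
    unfold gaussD
    rw [hcst]
    have hexp : Real.exp (-(z - (r + (z - r) / K * k)) ^ 2 / (2 * σ ^ 2)) *
        Real.exp (-(l * (n + 2 * ((z - r) / K) * t + ((z - r) / K) ^ 2 * p)) / (2 * σ ^ 2))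
        = Real.exp D * Real.exp (-(z - m0) ^ 2 / (2 * σhatSq)) := by
      rw [← Real.exp_add, ← Real.exp_add]
      congr 1
      rw [hD, hm0, hμ, hσhatSq, hA', hK]
      have hK' : (1 : ℝ) + k ≠ 0 := by rw [← hK]; exact hKpos.ne'
      have hA'' : (1 : ℝ) + l * p ≠ 0 := by rw [← hA']; exact hApos.ne'
      rw [htdef]
      field_simp
      ring
    calc (Real.sqrt (2 * π * σ ^ 2))⁻¹ *
          Real.exp (-(z - (r + (z - r) / K * k)) ^ 2 / (2 * σ ^ 2)) *
          Real.exp (-(l * (n + 2 * ((z - r) / K) * t + ((z - r) / K) ^ 2 * p)) / (2 * σ ^ 2))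
        = (Real.sqrt (2 * π * σ ^ 2))⁻¹ *
          (Real.exp D * Real.exp (-(z - m0) ^ 2 / (2 * σhatSq))) := by
          rw [mul_assoc, hexp]
      _ = Real.sqrt (2 * π * σhatSq) * (Real.sqrt (2 * π * σ ^ 2))⁻¹ * Real.exp D *
          ((Real.sqrt (2 * π * σhatSq))⁻¹ * Real.exp (-(z - m0) ^ 2 / (2 * σhatSq))) := by
          field_simp
  -- integrate
  have hint : (∫ y' : ℝ, f y') = cst := by
    simp_rw [hfc]
    rw [MeasureTheory.integral_const_mul, gaussD_integral m0 σhatSq hσhpos, mul_one]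
  intro y
  rw [hfc y, hint, mul_comm, mul_div_assoc, div_self hcstpos.ne', mul_one]
end

section
/- (Exact behavior in the smallest-eigenvalue subspace) Let λ > 0 and σ > 0, and suppose the test vector x satisfies XᵀX x = 0 (x lies in the null space of the empirical correlation matrix of the training data). Then P_λ x = x/λ, K_λ = 1 + ‖x‖²/λ, A_λ = 1 + ‖x‖²/λ, the LpNML shift satisfies μ̂ = θ̂_λᵀx exactly, and the LpNML variance satisfies σ̂² = σ²(1 + ‖x‖²/λ). In particular the LpNML predictive mean θ̂_λᵀx − μ̂ equals 0. -/
open Matrix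

theorem aux_posdef {N M : ℕ} (X : Matrix (Fin N) (Fin M) ℝ) (l : ℝ) (hl : 0 < l) :
    (Xᵀ * X + l • (1 : Matrix (Fin M) (Fin M) ℝ)).PosDef := by
  have h1 : (Xᵀ * X : Matrix (Fin M) (Fin M) ℝ).PosSemidef := by
    simpa [conjTranspose_eq_transpose_of_trivial] using posSemidef_conjTranspose_mul_self X
  rw [posDef_iff_dotProduct_mulVec]
  constructor
  · exact h1.1.add (by simp [Matrix.IsHermitian, conjTranspose_smul])
  · intro v hv
    have h2 := h1.dotProduct_mulVec_nonneg v
    have h4 : 0 < v ⬝ᵥ v := by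
      have := dotProduct_star_self_pos_iff (v := v) |>.2 hv
      simpa using this
    have h3 : star v ⬝ᵥ ((Xᵀ * X + l • (1 : Matrix (Fin M) (Fin M) ℝ)) *ᵥ v)
        = star v ⬝ᵥ ((Xᵀ * X) *ᵥ v) + l * (v ⬝ᵥ v) := by
      simp [add_mulVec, dotProduct_add, smul_mulVec, star_trivial]
    rw [h3] at *
    nlinarith


/-- **exact behavior in the smallest-eigenvalue subspace.** For `λ > 0`,
`σ > 0` and a test vector `x` with `XᵀX x = 0`: `P_λ x = x/λ`, `K_λ = 1 + ‖x‖²/λ`,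
`A_λ = 1 + ‖x‖²/λ`, the LpNML shift satisfies `μ̂ = θ̂_λᵀx` exactly, and the LpNML
variance is `σ̂² = σ²(1 + ‖x‖²/λ)`; in particular the LpNML predictive mean
`θ̂_λᵀx − μ̂` equals `0`. -/
theorem lpnml_smallest_eigenvalue_subspace {N M : ℕ}
    (X : Matrix (Fin N) (Fin M) ℝ) (Y : Fin N → ℝ) (x : Fin M → ℝ)
    (l σ : ℝ) (hl : 0 < l) (hσ : 0 < σ)
    (hx : (Xᵀ * X) *ᵥ x = 0)
    (P : Matrix (Fin M) (Fin M) ℝ) (θridge : Fin M → ℝ) (K A μ σhatSq : ℝ)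
    (hP : P = (Xᵀ * X + l • (1 : Matrix (Fin M) (Fin M) ℝ))⁻¹)
    (hθridge : θridge = P *ᵥ (Xᵀ *ᵥ Y))
    (hK : K = 1 + x ⬝ᵥ (P *ᵥ x))
    (hA : A = 1 + l * (x ⬝ᵥ ((P * P) *ᵥ x)))
    (hμ : μ = l * K * (θridge ⬝ᵥ (P *ᵥ x)) / A)
    (hσhatSq : σhatSq = σ ^ 2 * K ^ 2 / A) :
    P *ᵥ x = l⁻¹ • x ∧
    K = 1 + (x ⬝ᵥ x) / l ∧
    A = 1 + (x ⬝ᵥ x) / l ∧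
    μ = θridge ⬝ᵥ x ∧
    σhatSq = σ ^ 2 * (1 + (x ⬝ᵥ x) / l) ∧
    θridge ⬝ᵥ x - μ = 0 := by
  set S := Xᵀ * X + l • (1 : Matrix (Fin M) (Fin M) ℝ) with hS
  have hpd := aux_posdef X l hl
  have hinv : P * S = 1 := by rw [hP]; exact Matrix.nonsing_inv_mul S (isUnit_iff_isUnit_det S |>.1 hpd.isUnit)
  have hSx : S *ᵥ x = l • x := by
    rw [hS, add_mulVec, hx, smul_mulVec, one_mulVec, zero_add]
  have hPx : P *ᵥ x = l⁻¹ • x := by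
    have : P *ᵥ (S *ᵥ x) = x := by
      rw [mulVec_mulVec, hinv, one_mulVec]
    rw [hSx, mulVec_smul] at this
    calc P *ᵥ x = l⁻¹ • (l • (P *ᵥ x)) := by
            rw [smul_smul, inv_mul_cancel₀ hl.ne', one_smul]
      _ = l⁻¹ • x := by rw [this]
  have hxx : 0 ≤ x ⬝ᵥ x := by
    have := dotProduct_star_self_nonneg x; simpa using this
  have hKval : K = 1 + (x ⬝ᵥ x) / l := by
    rw [hK, hPx, dotProduct_smul, smul_eq_mul, div_eq_inv_mul]
  have hAval : A = 1 + (x ⬝ᵥ x) / l := by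
    rw [hA, ← mulVec_mulVec, hPx, mulVec_smul, hPx, smul_smul, dotProduct_smul, smul_eq_mul]
    field_simp
  have hApos : 0 < A := by
    rw [hAval]; positivity
  have hKA : K = A := by rw [hKval, hAval]
  have hμval : μ = θridge ⬝ᵥ x := by
    rw [hμ, hPx, dotProduct_smul, smul_eq_mul, hKA]
    field_simp
  refine ⟨hPx, hKval, hAval, hμval, ?_, by rw [hμval]; ring⟩
  rw [hσhatSq, hKA, hAval]
  field_simp
end

section
/- (The LpNML variance is never below the noise level) Let λ > 0, σ > 0, and x ∈ ℝ^M. Then the LpNML variance satisfies σ̂² = σ² K_λ²/A_λ ≥ σ², with equality if and only if xᵀP_λ x = 0. -/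
open Matrix

/-- **the LpNML variance is never below the noise level.** For `λ > 0`,
`σ > 0` and every `x`, the LpNML variance satisfies `σ̂² = σ²K_λ²/A_λ ≥ σ²`, with
equality iff `xᵀP_λx = 0`. -/
theorem lpnml_variance_ge_noise {N M : ℕ}
    (X : Matrix (Fin N) (Fin M) ℝ) (x : Fin M → ℝ)
    (l σ : ℝ) (hl : 0 < l) (hσ : 0 < σ)
    (P : Matrix (Fin M) (Fin M) ℝ) (K A σhatSq : ℝ)
    (hP : P = (Xᵀ * X + l • (1 : Matrix (Fin M) (Fin M) ℝ))⁻¹)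
    (hK : K = 1 + x ⬝ᵥ (P *ᵥ x))
    (hA : A = 1 + l * (x ⬝ᵥ ((P * P) *ᵥ x)))
    (hσhatSq : σhatSq = σ ^ 2 * K ^ 2 / A) :
    σ ^ 2 ≤ σhatSq ∧ (σhatSq = σ ^ 2 ↔ x ⬝ᵥ (P *ᵥ x) = 0) := by
  set S : Matrix (Fin M) (Fin M) ℝ := Xᵀ * X + l • (1 : Matrix (Fin M) (Fin M) ℝ) with hS
  -- S is positive definite
  have hXX : (Xᵀ * X).PosSemidef := by
    simpa using posSemidef_conjTranspose_mul_self X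
  have hL1 : (l • (1 : Matrix (Fin M) (Fin M) ℝ)).PosDef := by
    refine posDef_iff_dotProduct_mulVec.mpr ⟨?_, fun v hv => ?_⟩
    · simp [IsHermitian, conjTranspose_smul]
    · have hvv : 0 < v ⬝ᵥ v := by
        rcases lt_or_eq_of_le (Finset.sum_nonneg fun i _ => mul_self_nonneg (v i) :
            (0:ℝ) ≤ v ⬝ᵥ v) with h | h
        · exact h
        · exact absurd (dotProduct_self_eq_zero.mp h.symm) hv
      have : star v ⬝ᵥ (l • (1 : Matrix (Fin M) (Fin M) ℝ)) *ᵥ v = l * (v ⬝ᵥ v) := by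
        simp [smul_mulVec, dotProduct_smul, star_trivial]
      rw [this]
      positivity
  have hSpd : S.PosDef := Matrix.PosDef.posSemidef_add hXX hL1
  have hPpd : P.PosDef := hP ▸ hSpd.inv
  have hPsymm : Pᵀ = P := by
    exact (by simpa using hPpd.isHermitian : P.IsSymm).eq
  have hSP : S * P = 1 := by
    rw [hP]
    exact mul_nonsing_inv S (isUnit_iff_isUnit_det S |>.mp hSpd.isUnit)
  set y : Fin M → ℝ := P *ᵥ x with hy
  set q : ℝ := x ⬝ᵥ (P *ᵥ x) with hq
  set p : ℝ := x ⬝ᵥ ((P * P) *ᵥ x) with hp'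
  -- p = y ⬝ᵥ y
  have hpy : p = y ⬝ᵥ y := by
    rw [hp', hy, ← mulVec_mulVec, dotProduct_mulVec, ← mulVec_transpose, hPsymm]
  have hp0 : 0 ≤ p := hpy ▸ Finset.sum_nonneg fun i _ => mul_self_nonneg (y i)
  -- q = y ⬝ᵥ S *ᵥ y
  have hqy : q = y ⬝ᵥ (S *ᵥ y) := by
    have : S *ᵥ y = x := by
      rw [hy, mulVec_mulVec, hSP, one_mulVec]
    rw [this, hq, dotProduct_comm]
  -- q ≥ l * p and q ≥ 0
  have hq_expand : q = y ⬝ᵥ ((Xᵀ * X) *ᵥ y) + l * (y ⬝ᵥ y) := by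
    rw [hqy, hS, add_mulVec, dotProduct_add, smul_mulVec, one_mulVec,
      dotProduct_smul, smul_eq_mul]
  have hXXy : 0 ≤ y ⬝ᵥ ((Xᵀ * X) *ᵥ y) := by simpa using hXX.dotProduct_mulVec_nonneg y
  have hqlp : l * p ≤ q := by
    rw [hq_expand, hpy]; linarith
  have hq0 : 0 ≤ q := by
    rw [hq_expand]
    have : 0 ≤ y ⬝ᵥ y := Finset.sum_nonneg fun i _ => mul_self_nonneg (y i)
    nlinarith
  -- q = 0 → p = 0
  have hq_imp : q = 0 → p = 0 := by
    intro h
    rw [hq_expand] at h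
    have hyy : 0 ≤ y ⬝ᵥ y := Finset.sum_nonneg fun i _ => mul_self_nonneg (y i)
    rw [hpy]
    nlinarith
  have hApos : 0 < A := by rw [hA]; nlinarith
  have hKA : A ≤ K ^ 2 := by rw [hA, hK]; nlinarith
  have hσ2 : (0:ℝ) < σ ^ 2 := by positivity
  constructor
  · rw [hσhatSq]
    rw [le_div_iff₀ hApos]
    nlinarith
  · constructor
    · intro h
      rw [hσhatSq, div_eq_iff hApos.ne'] at h
      have h' : σ ^ 2 * K ^ 2 = σ ^ 2 * A := by linarith
      have hKAeq := mul_left_cancel₀ hσ2.ne' h'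
      rw [hK, hA] at hKAeq
      nlinarith
    · intro h
      have hp0' : p = 0 := hq_imp h
      rw [hσhatSq, hK, hA, h, hp0']
      ring_nf
end
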